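/- Let (X, π) be a weighted n-partite simplicial complex that is a (γ₀,…,γ_{n−2})-local spectral expander. Then π is (ε₀,…,ε_{n−2})-product with ε_i = (n−1−i)·γ_i; that is, for every partial assignment α to a set S of at most n−2 coordinates and all distinct i, j ∈ [n]∖S, σ₂(C_α^{i→j}) ≤ (n−1−|S|)·γ_{|S|}. -/

import Mathlib

open Finset
open scoped Classical

noncomputable section

namespace PaperFormal

/-- A weighted `n`-partite simplicial complex: a nonempty finite set `Ω` of `n`-tuples
(the top faces, each tuple picking one element from each side `U i`) together with a
full-support probability distribution `π` on it. -/
structure WPC (n : ℕ) (U : Fin n → Type*) [∀ i, Fintype (U i)] [∀ i, DecidableEq (U i)] where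
  Ω : Finset (∀ i, U i)
  nonempty : Ω.Nonempty
  π : (∀ i, U i) → ℝ
  nonneg : ∀ ω, 0 ≤ π ω
  support : ∀ ω, 0 < π ω ↔ ω ∈ Ω
  sum_one : ∑ ω : ∀ i, U i, π ω = 1

/-- Partial assignments to the coordinates in `S`. -/
abbrev PAssign {n : ℕ} (U : Fin n → Type*) (S : Finset (Fin n)) : Type _ :=
  ∀ i : {x : Fin n // x ∈ S}, U i.1

variable {n : ℕ} {U : Fin n → Type*} [∀ i, Fintype (U i)] [∀ i, DecidableEq (U i)]

/-- Restriction of a tuple to the coordinates in `S`. -/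
def restr (S : Finset (Fin n)) (ω : ∀ i, U i) : PAssign U S := fun i => ω i.1

/-- The unique assignment to the empty set of coordinates. -/
def emptyA : PAssign U (∅ : Finset (Fin n)) := fun i => absurd i.2 (Finset.notMem_empty i.1)

/-- Probability of the event `E` under `π`. -/
def pr (X : WPC n U) (E : (∀ i, U i) → Prop) : ℝ :=
  ∑ ω : ∀ i, U i, if E ω then X.π ω else 0

lemma pr_congr (X : WPC n U) {E F : (∀ i, U i) → Prop} (h : ∀ ω, E ω ↔ F ω) :
    pr X E = pr X F :=
  Finset.sum_congr rfl fun ω _ => if_congr (h ω) rfl rfl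

/-- The `S`-marginal of `π`, evaluated at the partial assignment `α`. -/
def marg (X : WPC n U) (S : Finset (Fin n)) (α : PAssign U S) : ℝ :=
  pr X fun ω => restr S ω = α

/-- The pinned marginal `π_T^{(α)}`: the probability that the coordinates in `T` agree
with `β`, conditioned on the coordinates in `S` agreeing with `α`. -/
def cmarg (X : WPC n U) {S T : Finset (Fin n)} (α : PAssign U S) (β : PAssign U T) : ℝ :=
  pr X (fun ω => restr S ω = α ∧ restr T ω = β) / marg X S α

/-- The colored random walk `C_α^{I → J}`: entry `(τI, τJ)` is
`Pr[ω_J = τJ | ω_I = τI, ω_S = α]`. -/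
def Cwalk (X : WPC n U) (S I J : Finset (Fin n)) (α : PAssign U S)
    (τI : PAssign U I) (τJ : PAssign U J) : ℝ :=
  pr X (fun ω => restr S ω = α ∧ restr I ω = τI ∧ restr J ω = τJ) /
    pr X (fun ω => restr S ω = α ∧ restr I ω = τI)

/-- The second largest singular value of a row-stochastic matrix `M` satisfying
`μA M = μB`, with respect to the inner products weighted by `μA` and `μB`, via its
variational characterization
`σ₂(M) = sup { ⟨f, M g⟩_{μA} : ⟨f,1⟩_{μA} = ⟨g,1⟩_{μB} = 0, ‖f‖_{μA} = ‖g‖_{μB} = 1 }`. -/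
def sigma2 {A B : Type*} [Fintype A] [Fintype B]
    (μA : A → ℝ) (μB : B → ℝ) (M : A → B → ℝ) : ℝ :=
  sSup { r : ℝ | ∃ f : A → ℝ, ∃ g : B → ℝ,
    (∑ a, μA a * f a) = 0 ∧ (∑ b, μB b * g b) = 0 ∧
    (∑ a, μA a * f a ^ 2) = 1 ∧ (∑ b, μB b * g b ^ 2) = 1 ∧
    r = ∑ a, μA a * f a * ∑ b, M a b * g b }

/-- The second largest singular value `σ₂(C_α^{I → J})`, with respect to the inner
products weighted by the pinned marginals `π_I^{(α)}` and `π_J^{(α)}`. -/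
def sigma2C (X : WPC n U) (S I J : Finset (Fin n)) (α : PAssign U S) : ℝ :=
  sigma2 (fun τI : PAssign U I => cmarg X α τI) (fun τJ : PAssign U J => cmarg X α τJ)
    (Cwalk X S I J α)

/-- `ε^{I → J}`: the maximum of `σ₂(C_α^{I → J})` over all partial assignments `α`
to the coordinates outside `I ∪ J` (realizable on `Ω`). -/
def epsIJ (X : WPC n U) (I J : Finset (Fin n)) : ℝ :=
  sSup { r : ℝ | ∃ α : PAssign U (I ∪ J)ᶜ,
    0 < marg X (I ∪ J)ᶜ α ∧ r = sigma2C X (I ∪ J)ᶜ I J α }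

/-- `π` is `(ε 0, …, ε (n-2))`-product: for every realizable pinning `α` of a set `S` of at
most `n - 2` coordinates, and all distinct `i, j ∉ S`, `σ₂(C_α^{i → j}) ≤ ε |S|`. -/
def isProduct (X : WPC n U) (ε : ℕ → ℝ) : Prop :=
  ∀ S : Finset (Fin n), S.card ≤ n - 2 → ∀ α : PAssign U S, 0 < marg X S α →
    ∀ i j : Fin n, i ∉ S → j ∉ S → i ≠ j → sigma2C X S {i} {j} α ≤ ε S.card

/-- The update operator `Q_i`: resample the `i`-th coordinate according to `π`,
conditionally on all the other coordinates. -/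
def Qmat (X : WPC n U) (i : Fin n) : Matrix (∀ i, U i) (∀ i, U i) ℝ :=
  Matrix.of fun ω ω' =>
    pr X (fun τ => τ = ω' ∧ restr {i}ᶜ τ = restr {i}ᶜ ω) /
      pr X (fun τ => restr {i}ᶜ τ = restr {i}ᶜ ω)

/-- The sequential sweep `P_seq^{(s)} = Q_{s 0} Q_{s 1} ⋯ Q_{s (n-1)}`. -/
def Psq (X : WPC n U) (s : Equiv.Perm (Fin n)) : Matrix (∀ i, U i) (∀ i, U i) ℝ :=
  (List.ofFn fun j : Fin n => Qmat X (s j)).prod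

/-- The second largest singular value of the sequential sweep, with respect to the
inner product weighted by its stationary distribution `π`. -/
def sigma2P (X : WPC n U) (s : Equiv.Perm (Fin n)) : ℝ :=
  sigma2 X.π X.π fun ω ω' => Psq X s ω ω'

/-- The link graph `G_α` of a pinning `α` of the coordinates in `S`: vertices are pairs
`(i, x)` with `i ∉ S`, and `(i,x)`, `(j,y)` are adjacent when `i ≠ j` and the event
`{ω_i = x, ω_j = y, ω_S = α}` has positive probability. -/
def linkGraph (X : WPC n U) (S : Finset (Fin n)) (α : PAssign U S) :
    SimpleGraph ((i : Fin n) × U i) where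
  Adj v w := v.1 ≠ w.1 ∧ v.1 ∉ S ∧ w.1 ∉ S ∧
    0 < pr X fun ω => restr S ω = α ∧ ω v.1 = v.2 ∧ ω w.1 = w.2
  symm := by
    refine ⟨?_⟩
    rintro v w ⟨h1, h2, h3, h4⟩
    refine ⟨h1.symm, h3, h2, ?_⟩
    have e : pr X (fun ω => restr S ω = α ∧ ω w.1 = w.2 ∧ ω v.1 = v.2)
        = pr X (fun ω => restr S ω = α ∧ ω v.1 = v.2 ∧ ω w.1 = w.2) :=
      pr_congr X fun ω => by tauto
    rw [e]; exact h4
  loopless := by refine ⟨?_⟩; rintro v ⟨h1, -⟩; exact h1 rfl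

/-- `(X, π)` is link-connected: in every link graph (of a realizable pinning of at most
`n - 2` coordinates), every two valid vertices are connected by a path. -/
def linkConnected (X : WPC n U) : Prop :=
  ∀ S : Finset (Fin n), S.card ≤ n - 2 → ∀ α : PAssign U S, 0 < marg X S α →
    ∀ v w : (i : Fin n) × U i, v.1 ∉ S → w.1 ∉ S →
      0 < pr X (fun ω => restr S ω = α ∧ ω v.1 = v.2) →
      0 < pr X (fun ω => restr S ω = α ∧ ω w.1 = w.2) →
      (linkGraph X S α).Reachable v w

/-- The stationary measure of the random walk on the link graph `G_α`. -/
def linkMeas (X : WPC n U) (S : Finset (Fin n)) (α : PAssign U S) :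
    (i : Fin n) × U i → ℝ :=
  fun v => if v.1 ∈ S then 0 else
    (1 / ((n : ℝ) - (S.card : ℝ))) *
      (pr X (fun ω => restr S ω = α ∧ ω v.1 = v.2) / marg X S α)

/-- The random walk matrix `M_α` of the link graph `G_α`. -/
def linkWalk (X : WPC n U) (S : Finset (Fin n)) (α : PAssign U S) :
    (i : Fin n) × U i → (i : Fin n) × U i → ℝ :=
  fun v w =>
    if v.1 = w.1 ∨ v.1 ∈ S ∨ w.1 ∈ S then 0 else
      (1 / ((n : ℝ) - (S.card : ℝ) - 1)) *
        (pr X (fun ω => restr S ω = α ∧ ω v.1 = v.2 ∧ ω w.1 = w.2) /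
          pr X (fun ω => restr S ω = α ∧ ω v.1 = v.2))

/-- The second largest eigenvalue of a random walk matrix `M`, self-adjoint with respect
to the probability measure `μ`, via its variational characterization. -/
def lambda2 {A : Type*} [Fintype A] (μ : A → ℝ) (M : A → A → ℝ) : ℝ :=
  sSup { r : ℝ | ∃ f : A → ℝ,
    (∑ a, μ a * f a) = 0 ∧ (∑ a, μ a * f a ^ 2) = 1 ∧
    r = ∑ a, μ a * f a * ∑ b, M a b * f b }

/-- `(X, π)` is a `(γ 0, …, γ (n-2))`-local spectral expander:
`λ₂(M_α) ≤ γ |S|` for every realizable pinning `α` of at most `n - 2` coordinates. -/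
def isLocalExpander (X : WPC n U) (γ : ℕ → ℝ) : Prop :=
  ∀ S : Finset (Fin n), S.card ≤ n - 2 → ∀ α : PAssign U S, 0 < marg X S α →
    lambda2 (linkMeas X S α) (linkWalk X S α) ≤ γ S.card

/-- Kullback–Leibler divergence `D(μ ‖ ν) = Σ_a μ(a) log (μ(a) / ν(a))`. -/
def KL {A : Type*} [Fintype A] (μ ν : A → ℝ) : ℝ :=
  ∑ a, μ a * Real.log (μ a / ν a)

/-- `μ` is a probability distribution supported on `{a | P a}`. -/
def distOn {A : Type*} [Fintype A] (P : A → Prop) (μ : A → ℝ) : Prop :=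
  (∀ a, 0 ≤ μ a) ∧ (∑ a, μ a) = 1 ∧ ∀ a, ¬ P a → μ a = 0

/-- The `(I, J)` entropy contraction parameter `η^{I → J} = 1 - κ^{I → J}`, where
`κ^{I → J}` is the supremum of `D(μ C_α^{I→J} ‖ π_J^{(α)}) / D(μ ‖ π_I^{(α)})` over all
realizable pinnings `α` of the coordinates outside `I ∪ J` and all distributions `μ` on
the assignments of `I` compatible with `α`. -/
def etaIJ (X : WPC n U) (I J : Finset (Fin n)) : ℝ :=
  1 - sSup { r : ℝ | ∃ α : PAssign U (I ∪ J)ᶜ, 0 < marg X (I ∪ J)ᶜ α ∧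
    ∃ μ : PAssign U I → ℝ,
      distOn (fun τ => 0 < pr X fun ω => restr (I ∪ J)ᶜ ω = α ∧ restr I ω = τ) μ ∧
      KL μ (fun τ : PAssign U I => cmarg X α τ) ≠ 0 ∧
      r = KL (fun τJ : PAssign U J => ∑ τI : PAssign U I, μ τI * Cwalk X (I ∪ J)ᶜ I J α τI τJ)
            (fun τJ : PAssign U J => cmarg X α τJ) /
          KL μ (fun τ : PAssign U I => cmarg X α τ) }

/-- The entropy contraction factor `EC(M) = 1 - sup_μ D(μ M ‖ π) / D(μ ‖ π)` of a random
walk matrix `M` with stationary distribution `π`. -/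
def EC (X : WPC n U) (M : Matrix (∀ i, U i) (∀ i, U i) ℝ) : ℝ :=
  1 - sSup { r : ℝ | ∃ μ : (∀ i, U i) → ℝ, distOn (fun ω => ω ∈ X.Ω) μ ∧
    KL μ X.π ≠ 0 ∧ r = KL (Matrix.vecMul μ M) X.π / KL μ X.π }

/-- The `π`-weighted inner product on `ℝ^Ω`. -/
def ip (X : WPC n U) (f g : {ω // ω ∈ X.Ω} → ℝ) : ℝ :=
  ∑ ω : {ω // ω ∈ X.Ω}, X.π ω.1 * f ω * g ω

/-- The indicator vector `u_α ∈ ℝ^Ω` of the partial assignment `α` to the coordinates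
outside `T`. -/
def uvec (X : WPC n U) (T : Finset (Fin n)) (α : PAssign U Tᶜ) : {ω // ω ∈ X.Ω} → ℝ :=
  fun ω => if restr Tᶜ ω.1 = α then 1 else 0

/-- The subspace `U_T = span { u_α : α an assignment to the coordinates outside T }`. -/
def Uspan (X : WPC n U) (T : Finset (Fin n)) : Submodule ℝ ({ω // ω ∈ X.Ω} → ℝ) :=
  Submodule.span ℝ { f | ∃ α : PAssign U Tᶜ, f = uvec X T α }

/-- The subspace of functions on `Ω` depending only on the coordinates outside `T`. -/
def Uinv (X : WPC n U) (T : Finset (Fin n)) : Submodule ℝ ({ω // ω ∈ X.Ω} → ℝ) where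
  carrier := { f | ∀ ω ω' : {ω // ω ∈ X.Ω}, restr Tᶜ ω.1 = restr Tᶜ ω'.1 → f ω = f ω' }
  add_mem' := by
    intro f g hf hg ω ω' h
    simp only [Pi.add_apply, hf ω ω' h, hg ω ω' h]
  zero_mem' := by intro ω ω' h; rfl
  smul_mem' := by
    intro c f hf ω ω' h
    simp only [Pi.smul_apply, hf ω ω' h]

/-- The orthogonal complement (with respect to `⟨·,·⟩_π`) of a subspace, as a set. -/
def orthC (X : WPC n U) (W : Submodule ℝ ({ω // ω ∈ X.Ω} → ℝ)) :
    Set ({ω // ω ∈ X.Ω} → ℝ) :=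
  { f | ∀ g ∈ W, ip X f g = 0 }

/-- The cosine of the angle between two subspaces of `ℝ^Ω`:
`cos(A,B) = sup { ⟨u,v⟩_π : u ∈ A ∩ (A ⊓ B)ᗮ, v ∈ B ∩ (A ⊓ B)ᗮ, ‖u‖_π = ‖v‖_π = 1 }`. -/
def cosAngle (X : WPC n U) (A B : Submodule ℝ ({ω // ω ∈ X.Ω} → ℝ)) : ℝ :=
  sSup { r : ℝ | ∃ u, u ∈ A ∧ u ∈ orthC X (A ⊓ B) ∧
    ∃ v, v ∈ B ∧ v ∈ orthC X (A ⊓ B) ∧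
    ip X u u = 1 ∧ ip X v v = 1 ∧ r = ip X u v }

/-- The update operator `Q_i` as an operator on `ℝ^Ω`. -/
def Qop (X : WPC n U) (i : Fin n) (f : {ω // ω ∈ X.Ω} → ℝ) : {ω // ω ∈ X.Ω} → ℝ :=
  fun ω => ∑ ω' : {ω // ω ∈ X.Ω}, Qmat X i ω.1 ω'.1 * f ω'

/-- Concatenation of partial assignments on disjoint coordinate sets. -/
def joinAssign {S T : Finset (Fin n)} (β : PAssign U S) (α : PAssign U T) :
    PAssign U (S ∪ T) :=
  fun i => if h : i.1 ∈ S then β ⟨i.1, h⟩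
    else α ⟨i.1, (Finset.mem_union.mp i.2).resolve_left h⟩

/-- The `S`-marginal of a (not necessarily normalized) distribution `ν` on tuples. -/
def distMarg (ν : (∀ i, U i) → ℝ) (S : Finset (Fin n)) (a : PAssign U S) : ℝ :=
  ∑ ω : ∀ i, U i, if restr S ω = a then ν ω else 0

/-- The distribution `ν` conditioned on the `i`-th coordinate being `x`. -/
def condAt (ν : (∀ i, U i) → ℝ) (i : Fin n) (x : U i) : (∀ i, U i) → ℝ :=
  fun ω => if ω i = x then ν ω / (∑ ω' : ∀ i, U i, if ω' i = x then ν ω' else 0) else 0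

/-- The influence matrix `Inf_α` of the pinning `α` of the coordinates in `S`:
`Inf_α((i,x),(j,y)) = Pr[ω_j = y | ω_i = x, ω_S = α] - Pr[ω_j = y | ω_S = α]`
for `i ≠ j` outside `S`, and `0` otherwise. -/
def InfMat (X : WPC n U) (S : Finset (Fin n)) (α : PAssign U S) :
    Matrix ((i : Fin n) × U i) ((i : Fin n) × U i) ℝ :=
  Matrix.of fun v w =>
    if v.1 = w.1 ∨ v.1 ∈ S ∨ w.1 ∈ S then 0 else
      pr X (fun ω => restr S ω = α ∧ ω v.1 = v.2 ∧ ω w.1 = w.2) /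
          pr X (fun ω => restr S ω = α ∧ ω v.1 = v.2) -
        pr X (fun ω => restr S ω = α ∧ ω w.1 = w.2) / marg X S α

/-- `π` is `(c 0, …, c (n-2))`-spectrally independent: every (real) eigenvalue of the
influence matrix of a realizable pinning of at most `n - 2` coordinates is at most
`c |S|`. -/
def spectrallyIndependent (X : WPC n U) (c : ℕ → ℝ) : Prop :=
  ∀ S : Finset (Fin n), S.card ≤ n - 2 → ∀ α : PAssign U S, 0 < marg X S α →
    ∀ r : ℝ,
      (∃ v : ((i : Fin n) × U i) → ℝ, v ≠ 0 ∧ (InfMat X S α).mulVec v = r • v) →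
      r ≤ c S.card

end PaperFormal

namespace PaperFormal

variable {n : ℕ} {U : Fin n → Type*} [∀ i, Fintype (U i)] [∀ i, DecidableEq (U i)]

/-!
Fix a pinning `α` of `S` and test functions `f` on colour `i`, `g` on colour `j`, centred
with respect to the pinned marginals. Glue them into the function `f ⊕ g` on the vertices of
the link `G_α`; it is centred for the stationary measure of `M_α`. The link has no edges inside
a colour class and `M_α` is reversible, so the quadratic form of `M_α` at `f ⊕ g` is twice the
bilinear form `⟨f, C_α^{i→j} g⟩`, scaled by `1 / ((n - |S|) (n - |S| - 1))`, while
`‖f ⊕ g‖² = (‖f‖² + ‖g‖²) / (n - |S|)`. The variational bound by `λ₂(M_α) ≤ γ_{|S|}` then gives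
`⟨f, C_α^{i→j} g⟩ ≤ (n - 1 - |S|) γ_{|S|}` for unit `f`, `g`.
-/

section Rayleigh

variable {A : Type*} [Fintype A] (μ : A → ℝ) (M : A → A → ℝ)

def rayleigh (f g : A → ℝ) : ℝ := ∑ a, μ a * f a * ∑ b, M a b * g b

lemma rayleigh_add_left (f₁ f₂ g : A → ℝ) :
    rayleigh μ M (f₁ + f₂) g = rayleigh μ M f₁ g + rayleigh μ M f₂ g := by
  simp only [rayleigh, Pi.add_apply, mul_add, add_mul, sum_add_distrib]

lemma rayleigh_add_right (f g₁ g₂ : A → ℝ) :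
    rayleigh μ M f (g₁ + g₂) = rayleigh μ M f g₁ + rayleigh μ M f g₂ := by
  simp only [rayleigh, Pi.add_apply, mul_add, sum_add_distrib]

variable {μ M}

lemma rayleigh_comm (hrev : ∀ a b, μ a * M a b = μ b * M b a) (f g : A → ℝ) :
    rayleigh μ M f g = rayleigh μ M g f := by
  simp only [rayleigh, mul_sum]
  rw [sum_comm]
  refine sum_congr rfl fun a _ => sum_congr rfl fun b _ => ?_
  linear_combination (f b * g a) * hrev b a

lemma rayleigh_self_le (hμ : ∀ a, 0 ≤ μ a) (hM : ∀ a b, 0 ≤ M a b)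
    (hrev : ∀ a b, μ a * M a b = μ b * M b a) (hsub : ∀ a, ∑ b, μ a * M a b ≤ μ a)
    (h : A → ℝ) : rayleigh μ M h h ≤ ∑ a, μ a * h a ^ 2 := by
  have hamgm : rayleigh μ M h h ≤ ∑ a, ∑ b, μ a * M a b * ((h a ^ 2 + h b ^ 2) / 2) := by
    simp only [rayleigh, mul_sum]
    refine sum_le_sum fun a _ => sum_le_sum fun b _ => ?_
    nlinarith [mul_nonneg (hμ a) (hM a b), sq_nonneg (h a - h b)]
  have hswap : ∑ a, ∑ b, μ a * M a b * h b ^ 2 = ∑ a, ∑ b, μ a * M a b * h a ^ 2 := by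
    rw [sum_comm]
    simp only [hrev]
  have hrow : ∑ a, ∑ b, μ a * M a b * h a ^ 2 ≤ ∑ a, μ a * h a ^ 2 := by
    gcongr with a
    rw [← sum_mul]
    exact mul_le_mul_of_nonneg_right (hsub a) (sq_nonneg _)
  calc rayleigh μ M h h ≤ _ := hamgm
    _ = (∑ a, ∑ b, μ a * M a b * h a ^ 2 + ∑ a, ∑ b, μ a * M a b * h b ^ 2) / 2 := by
      simp only [← sum_add_distrib, sum_div]
      refine sum_congr rfl fun a _ => sum_congr rfl fun b _ => by ring
    _ ≤ ∑ a, μ a * h a ^ 2 := by linarith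

lemma rayleigh_le_lambda2_mul (hμ : ∀ a, 0 ≤ μ a) (hM : ∀ a b, 0 ≤ M a b)
    (hrev : ∀ a b, μ a * M a b = μ b * M b a) (hsub : ∀ a, ∑ b, μ a * M a b ≤ μ a)
    {h : A → ℝ} (h0 : ∑ a, μ a * h a = 0) :
    rayleigh μ M h h ≤ lambda2 μ M * ∑ a, μ a * h a ^ 2 := by
  set s := ∑ a, μ a * h a ^ 2
  have hs0 : 0 ≤ s := sum_nonneg fun a _ => mul_nonneg (hμ a) (sq_nonneg (h a))
  rcases hs0.eq_or_lt with hs | hs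
  · rw [← hs, mul_zero, hs]
    exact rayleigh_self_le hμ hM hrev hsub h
  have hbdd : BddAbove {r | ∃ f : A → ℝ, ∑ a, μ a * f a = 0 ∧ ∑ a, μ a * f a ^ 2 = 1 ∧
      r = ∑ a, μ a * f a * ∑ b, M a b * f b} := by
    refine ⟨1, ?_⟩
    rintro r ⟨f, -, hf1, rfl⟩
    exact (rayleigh_self_le hμ hM hrev hsub f).trans_eq hf1
  set c := (Real.sqrt s)⁻¹
  have hc : c ^ 2 = s⁻¹ := by rw [inv_pow, Real.sq_sqrt hs0]
  have hmem : rayleigh μ M h h / s ≤ lambda2 μ M := by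
    refine le_csSup hbdd ⟨c • h, ?_, ?_, ?_⟩
    · simp only [Pi.smul_apply, smul_eq_mul, mul_left_comm _ c, ← mul_sum, h0, mul_zero]
    · simp only [Pi.smul_apply, smul_eq_mul, mul_pow, mul_left_comm (μ _) (c ^ 2)]
      rw [← mul_sum, hc]
      exact inv_mul_cancel₀ hs.ne'
    · simp only [rayleigh, Pi.smul_apply, smul_eq_mul, div_eq_mul_inv, ← hc, sum_mul, mul_sum]
      exact sum_congr rfl fun a _ => sum_congr rfl fun b _ => by ring
  rwa [div_le_iff₀ hs] at hmem

end Rayleigh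

lemma card_add_two_le {S : Finset (Fin n)} {i j : Fin n} (hi : i ∉ S) (hj : j ∉ S)
    (hij : i ≠ j) : S.card + 2 ≤ n := by
  have h := (insert i (insert j S)).card_le_univ
  rw [card_insert_of_notMem (by simp [hij, hi]), card_insert_of_notMem hj,
    Fintype.card_fin] at h
  omega

section Probability

variable (X : WPC n U)

lemma pr_nonneg (E : (∀ i, U i) → Prop) : 0 ≤ pr X E :=
  sum_nonneg fun ω _ => by split_ifs <;> [exact X.nonneg ω; rfl]

lemma pr_mono {E F : (∀ i, U i) → Prop} (h : ∀ ω, E ω → F ω) : pr X E ≤ pr X F :=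
  sum_le_sum fun ω _ => by
    by_cases hE : E ω
    · simp [hE, h ω hE]
    · simp only [hE, if_false]; split_ifs <;> [exact X.nonneg ω; rfl]

lemma pr_eq_zero_of_imp {E F : (∀ i, U i) → Prop} (h : ∀ ω, E ω → F ω) (hF : pr X F = 0) :
    pr X E = 0 :=
  le_antisymm (hF ▸ pr_mono X h) (pr_nonneg X E)

lemma sum_pr_and_eq (E : (∀ i, U i) → Prop) (k : Fin n) :
    ∑ y : U k, pr X (fun ω => E ω ∧ ω k = y) = pr X E := by
  unfold pr
  rw [sum_comm]
  refine sum_congr rfl fun ω _ => ?_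
  by_cases hE : E ω <;> simp [hE]

end Probability

section LinkWalk

variable (X : WPC n U) (S : Finset (Fin n)) (α : PAssign U S)

lemma linkMeas_nonneg (v : (i : Fin n) × U i) : 0 ≤ linkMeas X S α v := by
  unfold linkMeas
  split_ifs
  · rfl
  · have : (S.card : ℝ) ≤ n := by exact_mod_cast S.card_le_univ.trans_eq (Fintype.card_fin n)
    exact mul_nonneg (one_div_nonneg.2 (by linarith)) (div_nonneg (pr_nonneg X _) (pr_nonneg X _))

lemma linkWalk_nonneg (v w : (i : Fin n) × U i) : 0 ≤ linkWalk X S α v w := by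
  unfold linkWalk
  split_ifs with h
  · rfl
  · rw [not_or, not_or] at h
    have : ((S.card + 2 : ℕ) : ℝ) ≤ n := by exact_mod_cast card_add_two_le h.2.1 h.2.2 h.1
    push_cast at this
    exact mul_nonneg (one_div_nonneg.2 (by linarith)) (div_nonneg (pr_nonneg X _) (pr_nonneg X _))

lemma linkMeas_mul_linkWalk {v w : (i : Fin n) × U i} (hvw : v.1 ≠ w.1) (hv : v.1 ∉ S)
    (hw : w.1 ∉ S) :
    linkMeas X S α v * linkWalk X S α v w =
      pr X (fun ω => restr S ω = α ∧ ω v.1 = v.2 ∧ ω w.1 = w.2) /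
        ((n - S.card) * (n - S.card - 1) * marg X S α) := by
  have hcond : ¬(v.1 = w.1 ∨ v.1 ∈ S ∨ w.1 ∈ S) := by tauto
  simp only [linkMeas, linkWalk, if_neg hv, if_neg hcond]
  by_cases hp : pr X (fun ω => restr S ω = α ∧ ω v.1 = v.2) = 0
  · rw [hp, pr_eq_zero_of_imp X (fun ω h => ⟨h.1, h.2.1⟩) hp]
    simp
  · field_simp

lemma linkMeas_mul_linkWalk_comm (v w : (i : Fin n) × U i) :
    linkMeas X S α v * linkWalk X S α v w = linkMeas X S α w * linkWalk X S α w v := by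
  by_cases h : v.1 = w.1 ∨ v.1 ∈ S ∨ w.1 ∈ S
  · have h' : w.1 = v.1 ∨ w.1 ∈ S ∨ v.1 ∈ S := by rw [eq_comm]; tauto
    simp only [linkWalk, if_pos h, if_pos h', mul_zero]
  · rw [not_or, not_or] at h
    rw [linkMeas_mul_linkWalk X S α h.1 h.2.1 h.2.2,
      linkMeas_mul_linkWalk X S α (Ne.symm h.1) h.2.2 h.2.1]
    congr 1
    exact pr_congr X fun ω => by tauto

lemma sum_linkWalk_le_one (v : (i : Fin n) × U i) : ∑ w, linkWalk X S α v w ≤ 1 := by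
  by_cases hv : v.1 ∈ S
  · simp [linkWalk, hv]
  set p := pr X (fun ω => restr S ω = α ∧ ω v.1 = v.2)
  have hclass : ∀ k, ∑ x : U k, linkWalk X S α v ⟨k, x⟩ =
      if k ∈ insert v.1 S then 0 else 1 / (n - S.card - 1) * (p / p) := by
    intro k
    split_ifs with hk
    · refine sum_eq_zero fun x _ => if_pos ?_
      rw [mem_insert] at hk
      tauto
    · rw [mem_insert, not_or] at hk
      have hcond : ¬(v.1 = k ∨ v.1 ∈ S ∨ k ∈ S) := by rw [eq_comm]; tauto
      simp only [linkWalk, if_neg hcond]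
      rw [← mul_sum, ← sum_div]
      congr 2
      simpa only [and_assoc] using sum_pr_and_eq X (fun ω => restr S ω = α ∧ ω v.1 = v.2) k
  have hcard : ((insert v.1 S)ᶜ.card : ℝ) = n - S.card - 1 := by
    have h := card_compl_add_card (insert v.1 S)
    rw [card_insert_of_notMem hv, Fintype.card_fin] at h
    have h' : ((insert v.1 S)ᶜ.card : ℝ) + (S.card + 1) = n := by exact_mod_cast h
    linarith
  rw [Fintype.sum_sigma, sum_congr rfl fun k _ => hclass k, sum_ite, sum_const_zero, zero_add,
    sum_const, nsmul_eq_mul, filter_not, filter_mem_eq_inter, univ_inter, ← compl_eq_univ_sdiff,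
    hcard, ← mul_assoc, mul_one_div]
  exact mul_le_one₀ (div_self_le_one _) (div_nonneg (pr_nonneg X _) (pr_nonneg X _))
    (div_self_le_one _)

lemma sum_linkMeas_mul_linkWalk_le (v : (i : Fin n) × U i) :
    ∑ w, linkMeas X S α v * linkWalk X S α v w ≤ linkMeas X S α v := by
  rw [← mul_sum]
  exact mul_le_of_le_one_right (linkMeas_nonneg X S α v) (sum_linkWalk_le_one X S α v)

lemma linkMeas_of_notMem {i : Fin n} (hi : i ∉ S) (x : U i) :
    linkMeas X S α ⟨i, x⟩ =
      pr X (fun ω => restr S ω = α ∧ ω i = x) / ((n - S.card) * marg X S α) := by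
  rw [linkMeas, if_neg hi, one_div_mul_eq_div, div_div, mul_comm (marg X S α)]

end LinkWalk

section ColourClass

omit [∀ i, DecidableEq (U i)]

omit [∀ i, Fintype (U i)] in
def liftClass (i : Fin n) (f : U i → ℝ) : (k : Fin n) × U k → ℝ :=
  Sigma.uncurry (Pi.single (M := fun k => U k → ℝ) i f)

omit [∀ i, Fintype (U i)] in
lemma liftClass_apply_ne {i : Fin n} (f : U i → ℝ) {v : (k : Fin n) × U k} (hv : v.1 ≠ i) :
    liftClass i f v = 0 := by
  simp [liftClass, Sigma.uncurry, Pi.single_eq_of_ne hv]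

omit [∀ i, Fintype (U i)] in
lemma liftClass_apply_self {i : Fin n} (f : U i → ℝ) (x : U i) :
    liftClass i f ⟨i, x⟩ = f x := by
  simp [liftClass, Sigma.uncurry]

lemma sum_liftClass_mul (i : Fin n) (f : U i → ℝ) (w : (k : Fin n) × U k → ℝ) :
    ∑ v, liftClass i f v * w v = ∑ x, f x * w ⟨i, x⟩ := by
  rw [Fintype.sum_sigma, sum_eq_single i]
  · simp only [liftClass_apply_self]
  · intro k _ hk
    exact sum_eq_zero fun x _ => by rw [liftClass_apply_ne f hk, zero_mul]
  · simp

lemma rayleigh_liftClass (μ : (k : Fin n) × U k → ℝ)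
    (M : (k : Fin n) × U k → (k : Fin n) × U k → ℝ) (i j : Fin n) (f : U i → ℝ) (g : U j → ℝ) :
    rayleigh μ M (liftClass i f) (liftClass j g) =
      ∑ x, ∑ y, μ ⟨i, x⟩ * M ⟨i, x⟩ ⟨j, y⟩ * f x * g y := by
  simp only [rayleigh, mul_comm (μ _), mul_assoc, sum_liftClass_mul, mul_comm _ (liftClass j g _)]
  refine sum_congr rfl fun x _ => ?_
  rw [sum_mul, mul_sum]
  exact sum_congr rfl fun y _ => by ring

omit [∀ i, Fintype (U i)] [∀ i, DecidableEq (U i)] in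
lemma liftClass_sq (i : Fin n) (f : U i → ℝ) (v : (k : Fin n) × U k) :
    liftClass i f v ^ 2 = liftClass i (f ^ 2) v := by
  by_cases hv : v.1 = i
  · obtain ⟨k, x⟩ := v
    subst hv
    simp [liftClass_apply_self]
  · simp [liftClass_apply_ne _ hv]

omit [∀ i, Fintype (U i)] [∀ i, DecidableEq (U i)] in
lemma liftClass_mul_liftClass {i j : Fin n} (hij : i ≠ j) (f : U i → ℝ) (g : U j → ℝ)
    (v : (k : Fin n) × U k) : liftClass i f v * liftClass j g v = 0 := by
  by_cases hv : v.1 = i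
  · rw [liftClass_apply_ne g (hv ▸ hij), mul_zero]
  · rw [liftClass_apply_ne f hv, zero_mul]

omit [∀ i, Fintype (U i)] [∀ i, DecidableEq (U i)] in
lemma liftClass_add_liftClass_sq {i j : Fin n} (hij : i ≠ j) (f : U i → ℝ) (g : U j → ℝ)
    (v : (k : Fin n) × U k) :
    (liftClass i f + liftClass j g) v ^ 2 = liftClass i (f ^ 2) v + liftClass j (g ^ 2) v := by
  rw [Pi.add_apply, add_sq, mul_assoc, liftClass_mul_liftClass hij, liftClass_sq, liftClass_sq]
  ring

end ColourClass

section LinkTestFunctions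

variable (X : WPC n U) {S : Finset (Fin n)} (α : PAssign U S)

lemma sum_linkMeas_mul_liftClass {i : Fin n} (hi : i ∉ S) (f : U i → ℝ) :
    ∑ v, linkMeas X S α v * liftClass i f v =
      (∑ x, pr X (fun ω => restr S ω = α ∧ ω i = x) * f x) / ((n - S.card) * marg X S α) := by
  simp only [mul_comm (linkMeas X S α _), sum_liftClass_mul, linkMeas_of_notMem X S α hi,
    sum_div]
  exact sum_congr rfl fun x _ => by ring

lemma rayleigh_linkWalk_liftClass_self (k : Fin n) (f : U k → ℝ) :
    rayleigh (linkMeas X S α) (linkWalk X S α) (liftClass k f) (liftClass k f) = 0 := by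
  rw [rayleigh_liftClass]
  exact sum_eq_zero fun x _ => sum_eq_zero fun y _ => by simp [linkWalk]

lemma rayleigh_linkWalk_liftClass {i j : Fin n} (hi : i ∉ S) (hj : j ∉ S) (hij : i ≠ j)
    (f : U i → ℝ) (g : U j → ℝ) :
    rayleigh (linkMeas X S α) (linkWalk X S α) (liftClass i f) (liftClass j g) =
      (∑ x, ∑ y, pr X (fun ω => restr S ω = α ∧ ω i = x ∧ ω j = y) * f x * g y) /
        ((n - S.card) * marg X S α * (n - S.card - 1)) := by
  rw [rayleigh_liftClass, sum_div]
  refine sum_congr rfl fun x _ => ?_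
  rw [sum_div]
  refine sum_congr rfl fun y _ => ?_
  rw [linkMeas_mul_linkWalk X S α (v := ⟨i, x⟩) (w := ⟨j, y⟩) hij hi hj]
  ring

end LinkTestFunctions

theorem two_mul_sum_pr_pair_le_lambda2 (X : WPC n U) {S : Finset (Fin n)} {α : PAssign U S}
    (hα : 0 < marg X S α) {i j : Fin n} (hi : i ∉ S) (hj : j ∉ S) (hij : i ≠ j)
    {f : U i → ℝ} {g : U j → ℝ}
    (hf : ∑ x, pr X (fun ω => restr S ω = α ∧ ω i = x) * f x = 0)
    (hg : ∑ y, pr X (fun ω => restr S ω = α ∧ ω j = y) * g y = 0) :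
    2 * ∑ x, ∑ y, pr X (fun ω => restr S ω = α ∧ ω i = x ∧ ω j = y) * f x * g y ≤
      (n - S.card - 1) * lambda2 (linkMeas X S α) (linkWalk X S α) *
        (∑ x, pr X (fun ω => restr S ω = α ∧ ω i = x) * f x ^ 2 +
          ∑ y, pr X (fun ω => restr S ω = α ∧ ω j = y) * g y ^ 2) := by
  have hcard : ((S.card + 2 : ℕ) : ℝ) ≤ n := by exact_mod_cast card_add_two_le hi hj hij
  push_cast at hcard
  have hN : (0 : ℝ) < n - S.card := by linarith
  have hN1 : (0 : ℝ) < n - S.card - 1 := by linarith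
  have hrev := linkMeas_mul_linkWalk_comm X S α
  have hmean : ∑ v, linkMeas X S α v * (liftClass i f + liftClass j g) v = 0 := by
    simp only [Pi.add_apply, mul_add, sum_add_distrib, sum_linkMeas_mul_liftClass X α hi,
      sum_linkMeas_mul_liftClass X α hj, hf, hg, zero_div, add_zero]
  have hQ := rayleigh_le_lambda2_mul (linkMeas_nonneg X S α) (linkWalk_nonneg X S α) hrev
    (sum_linkMeas_mul_linkWalk_le X S α) hmean
  simp only [liftClass_add_liftClass_sq hij, mul_add, sum_add_distrib,
    sum_linkMeas_mul_liftClass X α hi, sum_linkMeas_mul_liftClass X α hj, Pi.pow_apply] at hQ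
  rw [rayleigh_add_left, rayleigh_add_right, rayleigh_add_right,
    rayleigh_linkWalk_liftClass_self, rayleigh_linkWalk_liftClass_self,
    rayleigh_comm hrev (liftClass j g), rayleigh_linkWalk_liftClass X α hi hj hij, zero_add,
    add_zero, ← mul_add, ← add_div, ← add_div, div_le_iff₀ (mul_pos (mul_pos hN hα) hN1)] at hQ
  calc 2 * _ = _ := two_mul _
    _ ≤ _ := hQ
    _ = _ := by field_simp [hN.ne']

section SingleCoordinate

variable (X : WPC n U) {S : Finset (Fin n)} (α : PAssign U S)

def singleAssign (i : Fin n) : U i ≃ PAssign U {i} :=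
  (Equiv.piUnique fun k : ({i} : Finset (Fin n)) => U k.1).symm

omit [∀ i, Fintype (U i)] [∀ i, DecidableEq (U i)] in
lemma restr_singleton_eq_iff {i : Fin n} (ω : ∀ k, U k) (x : U i) :
    restr {i} ω = singleAssign i x ↔ ω i = x :=
  Equiv.eq_symm_apply _

lemma cmarg_singleAssign {i : Fin n} (x : U i) :
    cmarg X α (singleAssign i x) = pr X (fun ω => restr S ω = α ∧ ω i = x) / marg X S α := by
  rw [cmarg, pr_congr X fun ω => and_congr_right' (restr_singleton_eq_iff ω x)]

lemma Cwalk_singleAssign {i j : Fin n} (x : U i) (y : U j) :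
    Cwalk X S {i} {j} α (singleAssign i x) (singleAssign j y) =
      pr X (fun ω => restr S ω = α ∧ ω i = x ∧ ω j = y) /
        pr X (fun ω => restr S ω = α ∧ ω i = x) := by
  rw [Cwalk, pr_congr X fun ω => and_congr_right' (and_congr (restr_singleton_eq_iff ω x)
      (restr_singleton_eq_iff ω y)),
    pr_congr X fun ω => and_congr_right' (restr_singleton_eq_iff ω x)]

lemma sum_cmarg_singleton_mul {i : Fin n} (f : PAssign U {i} → ℝ) :
    ∑ a, cmarg X α a * f a =
      (∑ x, pr X (fun ω => restr S ω = α ∧ ω i = x) * f (singleAssign i x)) / marg X S α := by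
  rw [← (singleAssign i).sum_comp, sum_div]
  exact sum_congr rfl fun x _ => by rw [cmarg_singleAssign, div_mul_eq_mul_div]

lemma sum_cmarg_mul_sum_Cwalk_singleton {i j : Fin n} (f : PAssign U {i} → ℝ) (g : PAssign U {j} → ℝ) :
    ∑ a, cmarg X α a * f a * ∑ b, Cwalk X S {i} {j} α a b * g b =
      (∑ x, ∑ y, pr X (fun ω => restr S ω = α ∧ ω i = x ∧ ω j = y) *
        f (singleAssign i x) * g (singleAssign j y)) / marg X S α := by
  rw [← (singleAssign i).sum_comp, sum_div]
  refine sum_congr rfl fun x _ => ?_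
  rw [← (singleAssign j).sum_comp, cmarg_singleAssign]
  simp only [Cwalk_singleAssign]
  by_cases hx : pr X (fun ω => restr S ω = α ∧ ω i = x) = 0
  · have hxy (y : U j) : pr X (fun ω => restr S ω = α ∧ ω i = x ∧ ω j = y) = 0 :=
      pr_eq_zero_of_imp X (fun ω h => ⟨h.1, h.2.1⟩) hx
    simp [hx, hxy]
  · rw [mul_sum, sum_div]
    exact sum_congr rfl fun y _ => by field_simp

end SingleCoordinate

theorem isProduct_of_localExpander
    (X : WPC n U) (γ : ℕ → ℝ) (hγ : ∀ m, 0 ≤ γ m) (hexp : isLocalExpander X γ) :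
    isProduct X fun m => ((n : ℝ) - 1 - (m : ℝ)) * γ m := by
  intro S hS α hα i j hi hj hij
  have hcard : ((S.card + 2 : ℕ) : ℝ) ≤ n := by exact_mod_cast card_add_two_le hi hj hij
  push_cast at hcard
  -- `sSup ∅ = 0`, so the bound has to be nonnegative
  refine Real.sSup_le ?_ (mul_nonneg (by linarith) (hγ _))
  rintro r ⟨f, g, hf0, hg0, hf1, hg1, rfl⟩
  simp only [sum_cmarg_singleton_mul, div_eq_zero_iff, hα.ne', or_false,
    div_eq_one_iff_eq hα.ne'] at hf0 hg0 hf1 hg1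
  have key := two_mul_sum_pr_pair_le_lambda2 X hα hi hj hij hf0 hg0
  rw [hf1, hg1] at key
  have hlam := mul_le_mul_of_nonneg_left (hexp S hS α hα)
    (mul_nonneg (by linarith : (0 : ℝ) ≤ n - S.card - 1) hα.le)
  rw [sum_cmarg_mul_sum_Cwalk_singleton, div_le_iff₀ hα]
  linarith

end PaperFormal
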